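/- Let (Ω, F, P) be a probability space, F : Ω → Ω a measure-preserving map, and g : Ω → ℝ^d integrable. Set ξ(k) = g ∘ F^k. Then for P-almost every ω, for all ν ≥ 1 and all 1 ≤ i_1,...,i_ν ≤ d, lim_{n→∞} n^{-ν} ∑_{0 ≤ k_1 < ... < k_ν < n} ξ_{i_1}(k_1)(ω) ⋯ ξ_{i_ν}(k_ν)(ω) = (1/ν!) ∏_{j=1}^ν Q_{i_j}(ω), where Q(ω) = lim_{n→∞} n^{-1} ∑_{k=0}^n ξ(k)(ω) is the almost-sure limit from the Birkhoff ergodic theorem. -/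

import Mathlib

set_option maxHeartbeats 1000000

open Filter Finset

/-- Abel summation with `f 0 * B 0 = 0` boundary. -/
lemma abel_id (f b : ℕ → ℝ) (n : ℕ) :
    ∑ m ∈ range n, f m * b m
      = f n * (∑ m ∈ range n, b m)
        - ∑ m ∈ range n, (f (m+1) - f m) * (∑ k ∈ range (m+1), b k) := by
  induction n with
  | zero => simp
  | succ n ih =>
    rw [sum_range_succ, ih, sum_range_succ (fun m => (f (m+1) - f m) * _), sum_range_succ b]
    ring

lemma pow_succ_sub_le (ν : ℕ) (m : ℕ) :
    ((ν:ℝ)+1) * (m:ℝ)^ν ≤ ((m:ℝ)+1)^(ν+1) - (m:ℝ)^(ν+1) ∧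
    ((m:ℝ)+1)^(ν+1) - (m:ℝ)^(ν+1) ≤ ((ν:ℝ)+1) * ((m:ℝ)+1)^ν := by
  have h := geom_sum₂_mul ((m:ℝ)+1) (m:ℝ) (ν+1)
  simp only [add_sub_cancel_left, mul_one] at h
  rw [← h]
  have hm : (0:ℝ) ≤ m := Nat.cast_nonneg m
  constructor
  · have key : ∀ i ∈ range (ν+1), (m:ℝ)^ν ≤ ((m:ℝ)+1)^i * (m:ℝ)^(ν+1-1-i) := by
      intro i hi
      rw [mem_range] at hi
      calc (m:ℝ)^ν = (m:ℝ)^i * (m:ℝ)^(ν+1-1-i) := by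
            rw [← pow_add]; congr 1; omega
        _ ≤ ((m:ℝ)+1)^i * (m:ℝ)^(ν+1-1-i) := by
            gcongr; linarith
    calc ((ν:ℝ)+1) * (m:ℝ)^ν = ∑ _i ∈ range (ν+1), (m:ℝ)^ν := by
          simp [mul_comm]
      _ ≤ ∑ i ∈ range (ν+1), ((m:ℝ)+1)^i * (m:ℝ)^(ν+1-1-i) := sum_le_sum key
  · have key : ∀ i ∈ range (ν+1), ((m:ℝ)+1)^i * (m:ℝ)^(ν+1-1-i) ≤ ((m:ℝ)+1)^ν := by
      intro i hi
      rw [mem_range] at hi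
      calc ((m:ℝ)+1)^i * (m:ℝ)^(ν+1-1-i) ≤ ((m:ℝ)+1)^i * ((m:ℝ)+1)^(ν+1-1-i) := by
            gcongr <;> linarith
        _ = ((m:ℝ)+1)^ν := by rw [← pow_add]; congr 1; omega
    calc ∑ i ∈ range (ν+1), ((m:ℝ)+1)^i * (m:ℝ)^(ν+1-1-i)
        ≤ ∑ _i ∈ range (ν+1), ((m:ℝ)+1)^ν := sum_le_sum key
      _ = ((ν:ℝ)+1) * ((m:ℝ)+1)^ν := by simp [mul_comm]

lemma sum_pow_bounds (ν : ℕ) (n : ℕ) :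
    ((ν:ℝ)+1) * ∑ m ∈ range n, (m:ℝ)^ν ≤ (n:ℝ)^(ν+1) ∧
    (n:ℝ)^(ν+1) ≤ ((ν:ℝ)+1) * ∑ m ∈ range n, ((m:ℝ)+1)^ν := by
  induction n with
  | zero => simp
  | succ n ih =>
    obtain ⟨ih1, ih2⟩ := ih
    obtain ⟨h1, h2⟩ := pow_succ_sub_le ν n
    constructor
    · rw [sum_range_succ, mul_add]; push_cast; nlinarith
    · rw [sum_range_succ, mul_add]; push_cast; nlinarith

/-- `(∑_{m<n} m^ν) / n^{ν+1} → 1/(ν+1)` -/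
lemma tendsto_sum_pow_div (ν : ℕ) :
    Tendsto (fun n : ℕ => (∑ m ∈ range n, (m:ℝ)^ν) / (n:ℝ)^(ν+1)) atTop
      (nhds (1/((ν:ℝ)+1))) := by
  have hν : (0:ℝ) < (ν:ℝ)+1 := by positivity
  have hshift : ∀ n : ℕ, ∑ m ∈ range n, ((m:ℝ)+1)^ν
      ≤ (∑ m ∈ range n, (m:ℝ)^ν) + (n:ℝ)^ν := by
    intro n
    have e : ∑ m ∈ range (n+1), ((m:ℕ):ℝ)^ν
        = (∑ m ∈ range n, (((m:ℕ):ℝ)+1)^ν) + ((0:ℕ):ℝ)^ν := by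
      rw [Finset.sum_range_succ' (fun m => ((m:ℕ):ℝ)^ν) n]
      push_cast
      ring_nf
    have e2 : ∑ m ∈ range (n+1), ((m:ℕ):ℝ)^ν
        = (∑ m ∈ range n, ((m:ℕ):ℝ)^ν) + (n:ℝ)^ν := by
      rw [sum_range_succ]
    have h0 : (0:ℝ) ≤ ((0:ℕ):ℝ)^ν := by positivity
    nlinarith [e, e2]
  apply tendsto_of_tendsto_of_tendsto_of_le_of_le'
    (g := fun n : ℕ => 1/((ν:ℝ)+1) - 1/(n:ℝ)) (h := fun _ => 1/((ν:ℝ)+1))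
  · have : Tendsto (fun n : ℕ => 1/(n:ℝ)) atTop (nhds 0) := by
      exact tendsto_one_div_atTop_nhds_zero_nat
    simpa using tendsto_const_nhds.sub this
  · exact tendsto_const_nhds
  · filter_upwards [eventually_ge_atTop 1] with n hn
    have hn' : (0:ℝ) < n := by exact_mod_cast hn
    have hpow : (0:ℝ) < (n:ℝ)^(ν+1) := by positivity
    rw [le_div_iff₀ hpow]
    have hps : (n:ℝ)^(ν+1) = (n:ℝ)^ν * n := pow_succ _ _
    have expand : (1/((ν:ℝ)+1) - 1/(n:ℝ)) * (n:ℝ)^(ν+1)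
        = (n:ℝ)^(ν+1)/((ν:ℝ)+1) - (n:ℝ)^ν := by
      rw [hps]; field_simp
    rw [expand]
    have key := (sum_pow_bounds ν n).2
    have k2 : (n:ℝ)^(ν+1)/((ν:ℝ)+1) ≤ (∑ m ∈ range n, (m:ℝ)^ν) + (n:ℝ)^ν := by
      rw [div_le_iff₀ hν]
      nlinarith [hshift n]
    linarith
  · filter_upwards [eventually_ge_atTop 1] with n hn
    have hn' : (0:ℝ) < n := by exact_mod_cast hn
    have hpow : (0:ℝ) < (n:ℝ)^(ν+1) := by positivity
    rw [div_le_div_iff₀ hpow hν]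
    nlinarith [(sum_pow_bounds ν n).1]

/-- Sums of terms eventually small compared to nonneg weights with controlled sums. -/
lemma tendsto_sum_err (ν : ℕ) (x v : ℕ → ℝ) (D : ℝ)
    (hv : ∀ m, 0 ≤ v m)
    (h1 : ∀ ε : ℝ, 0 < ε → ∀ᶠ m in atTop, |x m| ≤ ε * v m)
    (h2 : ∀ n : ℕ, ∑ m ∈ range n, v m ≤ D * (n:ℝ)^(ν+1)) :
    Tendsto (fun n : ℕ => (∑ m ∈ range n, x m) / (n:ℝ)^(ν+1)) atTop (nhds 0) := by
  have hD0 : 0 ≤ D := by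
    have h := h2 1
    have h0 := hv 0
    simp [sum_range_one] at h
    linarith
  rw [NormedAddCommGroup.tendsto_nhds_zero]
  intro ε hε
  set ε' : ℝ := ε / (2*(D+1)) with hε'def
  have hε'pos : 0 < ε' := by positivity
  obtain ⟨N, hN⟩ := eventually_atTop.mp (h1 ε' hε'pos)
  set K : ℝ := ∑ m ∈ range N, |x m| with hKdef
  have hK0 : 0 ≤ K := sum_nonneg fun _ _ => abs_nonneg _
  have bound : ∀ n, N ≤ n →
      |∑ m ∈ range n, x m| ≤ K + ε' * D * (n:ℝ)^(ν+1) := by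
    intro n hn
    calc |∑ m ∈ range n, x m| ≤ ∑ m ∈ range n, |x m| := abs_sum_le_sum_abs _ _
      _ = K + ∑ m ∈ Ico N n, |x m| := by
          rw [hKdef, Finset.sum_range_add_sum_Ico _ hn]
      _ ≤ K + ∑ m ∈ Ico N n, ε' * v m := by
          gcongr K + ?_
          apply sum_le_sum
          intro m hm
          exact hN m (mem_Ico.mp hm).1
      _ = K + ε' * ∑ m ∈ Ico N n, v m := by rw [mul_sum]
      _ ≤ K + ε' * ∑ m ∈ range n, v m := by
          have hsub : Ico N n ⊆ range n := by
            intro m hm; exact mem_range.mpr (mem_Ico.mp hm).2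
          exact (add_le_add_iff_left K).mpr (mul_le_mul_of_nonneg_left
            (sum_le_sum_of_subset_of_nonneg hsub (fun m _ _ => hv m)) hε'pos.le)
      _ ≤ K + ε' * (D * (n:ℝ)^(ν+1)) := by
          gcongr
          exact h2 n
      _ = K + ε' * D * (n:ℝ)^(ν+1) := by ring
  have hKlim : Tendsto (fun n : ℕ => K/(n:ℝ)^(ν+1)) atTop (nhds 0) := by
    apply Tendsto.div_atTop tendsto_const_nhds
    exact (tendsto_pow_atTop (Nat.succ_ne_zero ν)).comp tendsto_natCast_atTop_atTop
  have hev : ∀ᶠ n : ℕ in atTop, K/(n:ℝ)^(ν+1) < ε/2 :=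
    hKlim.eventually (gt_mem_nhds (by positivity))
  filter_upwards [hev, eventually_ge_atTop N, eventually_ge_atTop 1] with n h1n h2n h3n
  have hn' : (0:ℝ) < n := by exact_mod_cast h3n
  have hpow : (0:ℝ) < (n:ℝ)^(ν+1) := by positivity
  have e'D : ε' * D < ε/2 := by
    rw [hε'def]
    rw [div_mul_eq_mul_div, div_lt_div_iff₀ (by positivity) (by norm_num)]
    nlinarith
  calc ‖(∑ m ∈ range n, x m) / (n:ℝ)^(ν+1)‖
      = |∑ m ∈ range n, x m| / (n:ℝ)^(ν+1) := by
        rw [Real.norm_eq_abs, abs_div, abs_of_pos hpow]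
    _ ≤ (K + ε' * D * (n:ℝ)^(ν+1)) / (n:ℝ)^(ν+1) := by
        gcongr
        exact bound n h2n
    _ = K/(n:ℝ)^(ν+1) + ε' * D := by field_simp
    _ < ε/2 + ε/2 := by exact add_lt_add h1n e'D
    _ = ε := by ring

/-- Weighted averages: if `(∑_{m<n} b m)/n → A` then `(∑ m^ν b m)/n^(ν+1) → A/(ν+1)`. -/
lemma tendsto_weighted_avg (ν : ℕ) (b : ℕ → ℝ) (A : ℝ)
    (hB : Tendsto (fun n : ℕ => (∑ m ∈ range n, b m) / (n:ℝ)) atTop (nhds A)) :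
    Tendsto (fun n : ℕ => (∑ m ∈ range n, (m:ℝ)^ν * b m) / (n:ℝ)^(ν+1)) atTop
      (nhds (A/((ν:ℝ)+1))) := by
  set B : ℕ → ℝ := fun n => ∑ m ∈ range n, b m with hBdef
  set c : ℕ → ℝ := fun m => ((m:ℝ)+1)^ν - (m:ℝ)^ν with hcdef
  have hc0 : ∀ m, 0 ≤ c m := by
    intro m
    have : (m:ℝ)^ν ≤ ((m:ℝ)+1)^ν := by
      apply pow_le_pow_left₀ (Nat.cast_nonneg m)
      linarith
    simpa [hcdef] using this
  set e : ℕ → ℝ := fun m => B (m+1) - A*((m:ℝ)+1) with hedef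
  -- telescoping identity
  have tel : ∀ n : ℕ, ∑ m ∈ range n, c m * ((m:ℝ)+1) = (n:ℝ)^(ν+1) - ∑ m ∈ range n, (m:ℝ)^ν := by
    intro n
    have : ∀ m : ℕ, c m * ((m:ℝ)+1) = (((m+1:ℕ):ℝ)^(ν+1) - (m:ℝ)^(ν+1)) - (m:ℝ)^ν := by
      intro m
      push_cast
      simp only [hcdef]
      ring
    rw [sum_congr rfl (fun m _ => this m), sum_sub_distrib,
      Finset.sum_range_sub (fun m => ((m:ℕ):ℝ)^(ν+1))]
    simp
  -- abel summation
  have abel : ∀ n : ℕ, ∑ m ∈ range n, (m:ℝ)^ν * b m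
      = (n:ℝ)^ν * B n - ∑ m ∈ range n, c m * B (m+1) := by
    intro n
    have := abel_id (fun m : ℕ => (m:ℝ)^ν) b n
    rw [this]
    congr 1
    apply sum_congr rfl
    intro m _
    push_cast
    simp only [hcdef, hBdef]
  have hB1 : Tendsto (fun m : ℕ => B (m+1) / ((m:ℝ)+1)) atTop (nhds A) := by
    apply (hB.comp (tendsto_add_atTop_nat 1)).congr
    intro m
    simp only [Function.comp_apply, hBdef]
    push_cast
    rfl
  -- error term
  have herr : Tendsto (fun n : ℕ => (∑ m ∈ range n, c m * e m) / (n:ℝ)^(ν+1)) atTop (nhds 0) := by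
    apply tendsto_sum_err ν _ (fun m => c m * ((m:ℝ)+1)) 1
    · intro m
      have : (0:ℝ) ≤ (m:ℝ)+1 := by positivity
      exact mul_nonneg (hc0 m) this
    · intro ε hε
      have : ∀ᶠ m : ℕ in atTop, |B (m+1)/((m:ℝ)+1) - A| ≤ ε := by
        have := hB1.eventually (Metric.closedBall_mem_nhds A hε)
        simpa [Real.dist_eq] using this
      filter_upwards [this] with m hm
      have hpos : (0:ℝ) < (m:ℝ)+1 := by positivity
      have : |e m| ≤ ε * ((m:ℝ)+1) := by
        have : e m = (B (m+1)/((m:ℝ)+1) - A) * ((m:ℝ)+1) := by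
          simp only [hedef]; field_simp
        rw [this, abs_mul, abs_of_pos hpos]
        exact mul_le_mul_of_nonneg_right hm hpos.le
      calc |c m * e m| = c m * |e m| := by rw [abs_mul, abs_of_nonneg (hc0 m)]
        _ ≤ c m * (ε * ((m:ℝ)+1)) := mul_le_mul_of_nonneg_left this (hc0 m)
        _ = ε * (c m * ((m:ℝ)+1)) := by ring
    · intro n
      rw [tel n]
      have : 0 ≤ ∑ m ∈ range n, (m:ℝ)^ν := sum_nonneg fun m _ => by positivity
      linarith
  -- main term limits
  have hmain : Tendsto (fun n : ℕ => B n/(n:ℝ)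
      - A * (1 - (∑ m ∈ range n, (m:ℝ)^ν)/(n:ℝ)^(ν+1))
      - (∑ m ∈ range n, c m * e m) / (n:ℝ)^(ν+1)) atTop
      (nhds (A - A * (1 - 1/((ν:ℝ)+1)) - 0)) := by
    apply Tendsto.sub _ herr
    apply Tendsto.sub hB
    exact (tendsto_const_nhds.sub (tendsto_sum_pow_div ν)).const_mul A
  have : A - A * (1 - 1/((ν:ℝ)+1)) - 0 = A/((ν:ℝ)+1) := by ring
  rw [this] at hmain
  apply hmain.congr'
  filter_upwards [eventually_ge_atTop 1] with n hn
  have hn' : (0:ℝ) < n := by exact_mod_cast hn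
  have hpow : (0:ℝ) < (n:ℝ)^(ν+1) := by positivity
  have edecomp : ∀ m : ℕ, c m * B (m+1) = A * (c m * ((m:ℝ)+1)) + c m * e m := by
    intro m; simp only [hedef]; ring
  rw [abel n, sum_congr rfl (fun m _ => edecomp m), sum_add_distrib, ← mul_sum, tel n]
  have hns : (n:ℝ)^(ν+1) = (n:ℝ)^ν * n := pow_succ _ _
  field_simp
  ring

/-- Core analytic step: product of a `~L·m^ν` sequence with a Cesàro-convergent sequence. -/
lemma tendsto_prod_avg (ν : ℕ) (u b : ℕ → ℝ) (L A C : ℝ)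
    (hu : Tendsto (fun m : ℕ => u m / (m:ℝ)^ν) atTop (nhds L))
    (hB : Tendsto (fun n : ℕ => (∑ m ∈ range n, b m) / (n:ℝ)) atTop (nhds A))
    (habs : ∀ n : ℕ, ∑ m ∈ range n, |b m| ≤ C * ((n:ℝ)+1)) :
    Tendsto (fun n : ℕ => (∑ m ∈ range n, u m * b m) / (n:ℝ)^(ν+1)) atTop
      (nhds (L * A/((ν:ℝ)+1))) := by
  have hC0 : 0 ≤ C := by have := habs 0; simp at this; linarith
  have herr : Tendsto (fun n : ℕ =>
      (∑ m ∈ range n, (u m - L * (m:ℝ)^ν) * b m) / (n:ℝ)^(ν+1)) atTop (nhds 0) := by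
    apply tendsto_sum_err ν _ (fun m => (m:ℝ)^ν * |b m|) (2*C)
    · intro m; positivity
    · intro ε hε
      have hev : ∀ᶠ m : ℕ in atTop, |u m / (m:ℝ)^ν - L| ≤ ε := by
        have := hu.eventually (Metric.closedBall_mem_nhds L hε)
        simpa [Real.dist_eq] using this
      filter_upwards [hev, eventually_ge_atTop 1] with m hm hm1
      have hm' : (0:ℝ) < m := by exact_mod_cast hm1
      have hpow : (0:ℝ) < (m:ℝ)^ν := by positivity
      have key : |u m - L * (m:ℝ)^ν| ≤ ε * (m:ℝ)^ν := by
        have : u m - L * (m:ℝ)^ν = (u m / (m:ℝ)^ν - L) * (m:ℝ)^ν := by field_simp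
        rw [this, abs_mul, abs_of_pos hpow]
        exact mul_le_mul_of_nonneg_right hm hpow.le
      calc |(u m - L * (m:ℝ)^ν) * b m| = |u m - L * (m:ℝ)^ν| * |b m| := abs_mul _ _
        _ ≤ (ε * (m:ℝ)^ν) * |b m| := mul_le_mul_of_nonneg_right key (abs_nonneg _)
        _ = ε * ((m:ℝ)^ν * |b m|) := by ring
    · intro n
      rcases Nat.eq_zero_or_pos n with h | h
      · simp [h]
      have hn' : (1:ℝ) ≤ n := by exact_mod_cast h
      calc ∑ m ∈ range n, (m:ℝ)^ν * |b m| ≤ ∑ m ∈ range n, (n:ℝ)^ν * |b m| := by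
            apply sum_le_sum
            intro m hm
            have : (m:ℝ) ≤ n := by exact_mod_cast (mem_range.mp hm).le
            exact mul_le_mul_of_nonneg_right
              (pow_le_pow_left₀ (Nat.cast_nonneg m) this ν) (abs_nonneg _)
        _ = (n:ℝ)^ν * ∑ m ∈ range n, |b m| := by rw [mul_sum]
        _ ≤ (n:ℝ)^ν * (C * ((n:ℝ)+1)) := by
            apply mul_le_mul_of_nonneg_left (habs n) (by positivity)
        _ ≤ (n:ℝ)^ν * (C * (2*(n:ℝ))) := by
            apply mul_le_mul_of_nonneg_left _ (by positivity)
            apply mul_le_mul_of_nonneg_left _ hC0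
            linarith
        _ = 2*C * (n:ℝ)^(ν+1) := by rw [pow_succ]; ring
  have hmainL : Tendsto (fun n : ℕ =>
      L * ((∑ m ∈ range n, (m:ℝ)^ν * b m) / (n:ℝ)^(ν+1))
        + (∑ m ∈ range n, (u m - L * (m:ℝ)^ν) * b m) / (n:ℝ)^(ν+1)) atTop
      (nhds (L * (A/((ν:ℝ)+1)) + 0)) :=
    Tendsto.add ((tendsto_weighted_avg ν b A hB).const_mul L) herr
  have : L * (A/((ν:ℝ)+1)) + 0 = L*A/((ν:ℝ)+1) := by ring
  rw [this] at hmainL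
  apply hmainL.congr
  intro n
  rw [mul_div_assoc' L, ← add_div]
  congr 1
  rw [mul_sum, ← sum_add_distrib]
  apply sum_congr rfl
  intro m _
  ring

/-- Generic iterated sum over strictly increasing tuples. -/
noncomputable def iterSum {d : ℕ} (b : ℕ → Fin d → ℝ) {ν : ℕ} (i : Fin ν → Fin d) (n : ℕ) : ℝ :=
  ∑ k ∈ Finset.univ.filter (fun k : Fin ν → Fin n => ∀ p q : Fin ν, p < q → k p < k q),
    ∏ j : Fin ν, b ((k j : ℕ)) (i j)

lemma iterSum_zero {d : ℕ} (b : ℕ → Fin d → ℝ) (i : Fin 0 → Fin d) (n : ℕ) :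
    iterSum b i n = 1 := by
  rw [iterSum]
  rw [Finset.filter_true_of_mem (fun k _ => by intro p; exact absurd p.isLt (by omega))]
  simp

lemma iterSum_fiber {d ν n : ℕ} (b : ℕ → Fin d → ℝ) (i : Fin (ν+1) → Fin d) (m : Fin n) :
    ∑ k ∈ Finset.univ.filter (fun k : Fin (ν+1) → Fin n =>
        (∀ p q : Fin (ν+1), p < q → k p < k q) ∧ k (Fin.last ν) = m),
      ∏ j : Fin (ν+1), b ((k j : ℕ)) (i j)
    = iterSum b (fun j => i j.castSucc) (m : ℕ) * b (m : ℕ) (i (Fin.last ν)) := by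
  rw [iterSum, sum_mul]
  refine Finset.sum_bij'
    (fun k hk => fun j : Fin ν =>
      (⟨(k j.castSucc : ℕ), by
        have h := (Finset.mem_filter.mp hk).2
        have h2 := h.1 j.castSucc (Fin.last ν) (Fin.castSucc_lt_last j)
        rw [h.2] at h2
        exact h2⟩ : Fin (m:ℕ)))
    (fun k' _ => Fin.snoc (fun j : Fin ν =>
      (⟨(k' j : ℕ), lt_trans (k' j).isLt m.isLt⟩ : Fin n)) m)
    ?_ ?_ ?_ ?_ ?_
  · -- maps into t
    intro k hk
    refine Finset.mem_filter.mpr ⟨Finset.mem_univ _, ?_⟩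
    intro p q hpq
    have h := (Finset.mem_filter.mp hk).2
    have := h.1 p.castSucc q.castSucc (by rwa [Fin.castSucc_lt_castSucc_iff])
    exact this
  · -- maps into s
    intro k' hk'
    have h := (Finset.mem_filter.mp hk').2
    refine Finset.mem_filter.mpr ⟨Finset.mem_univ _, ?_, ?_⟩
    · intro p q hpq
      by_cases hq : q = Fin.last ν
      · subst hq
        obtain ⟨p', rfl⟩ := Fin.eq_castSucc_of_ne_last (ne_of_lt hpq)
        simp only [Fin.snoc_castSucc, Fin.snoc_last]
        exact (Fin.lt_def).mpr (k' p').isLt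
      · obtain ⟨q', rfl⟩ := Fin.eq_castSucc_of_ne_last hq
        have hp : p ≠ Fin.last ν :=
          ne_of_lt (lt_trans hpq (Fin.castSucc_lt_last q'))
        obtain ⟨p', rfl⟩ := Fin.eq_castSucc_of_ne_last hp
        simp only [Fin.snoc_castSucc]
        have := h p' q' (Fin.castSucc_lt_castSucc_iff.mp hpq)
        exact (Fin.lt_def).mpr ((Fin.lt_def).mp this)
    · simp [Fin.snoc_last]
  · -- left inverse
    intro k hk
    funext j
    by_cases hj : j = Fin.last ν
    · subst hj
      simp [Fin.snoc_last, ((Finset.mem_filter.mp hk).2).2.symm]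
    · obtain ⟨j', rfl⟩ := Fin.eq_castSucc_of_ne_last hj
      apply Fin.ext
      simp [Fin.snoc_castSucc]
  · -- right inverse
    intro k' hk'
    funext j
    apply Fin.ext
    simp [Fin.snoc_castSucc]
  · -- values
    intro k hk
    rw [Fin.prod_univ_castSucc]
    congr 1
    rw [((Finset.mem_filter.mp hk).2).2]

lemma iterSum_succ {d ν : ℕ} (b : ℕ → Fin d → ℝ) (i : Fin (ν+1) → Fin d) (n : ℕ) :
    iterSum b i n
      = ∑ m ∈ range n, iterSum b (fun j => i j.castSucc) m * b m (i (Fin.last ν)) := by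
  rw [iterSum]
  rw [← Finset.sum_fiberwise_of_maps_to (g := fun k : Fin (ν+1) → Fin n => k (Fin.last ν))
    (t := Finset.univ) (fun k _ => Finset.mem_univ _)]
  rw [← Fin.sum_univ_eq_sum_range
    (fun m => iterSum b (fun j => i j.castSucc) m * b m (i (Fin.last ν))) n]
  apply Finset.sum_congr rfl
  intro m _
  rw [← iterSum_fiber b i m, Finset.filter_filter]

/-- Master deterministic lemma: iterated sums from Cesàro-convergent data. -/
lemma iterSum_tendsto {d : ℕ} (b : ℕ → Fin d → ℝ) (Q : Fin d → ℝ) (C : ℝ)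
    (hQ : ∀ t, Tendsto (fun n : ℕ => (∑ m ∈ range n, b m t)/(n:ℝ)) atTop (nhds (Q t)))
    (habs : ∀ t (n : ℕ), ∑ m ∈ range n, |b m t| ≤ C*((n:ℝ)+1)) :
    ∀ (ν : ℕ) (i : Fin ν → Fin d),
      Tendsto (fun n : ℕ => iterSum b i n / (n:ℝ)^ν) atTop
        (nhds ((∏ j, Q (i j))/(ν.factorial : ℝ))) := by
  intro ν
  induction ν with
  | zero =>
    intro i
    simp only [iterSum_zero, pow_zero, Nat.factorial_zero]
    simp
  | succ ν ih =>
    intro i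
    have key := tendsto_prod_avg ν (fun m => iterSum b (fun j => i j.castSucc) m)
      (fun m => b m (i (Fin.last ν)))
      ((∏ j : Fin ν, Q (i j.castSucc))/(ν.factorial : ℝ)) (Q (i (Fin.last ν))) C
      (ih (fun j => i j.castSucc)) (hQ (i (Fin.last ν))) (habs (i (Fin.last ν)))
    have heq : ((∏ j : Fin ν, Q (i j.castSucc))/(ν.factorial : ℝ)) * Q (i (Fin.last ν)) / ((ν:ℝ)+1)
        = (∏ j : Fin (ν+1), Q (i j))/((ν+1).factorial : ℝ) := by
      rw [Fin.prod_univ_castSucc (fun j => Q (i j))]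
      rw [Nat.factorial_succ]
      push_cast
      rw [div_mul_eq_mul_div, div_div]
      congr 1
      ring
    rw [heq] at key
    apply key.congr
    intro n
    rw [iterSum_succ]

open MeasureTheory

section Birkhoff
variable {Ω : Type*} [MeasurableSpace Ω] {μ : Measure Ω} [IsProbabilityMeasure μ]
  {T : Ω → Ω} {f : Ω → ℝ}

/-- Garsia's maximal function: `maxS T f N = max_{0 ≤ n ≤ N} S_n f`. -/
noncomputable def maxS (T : Ω → Ω) (f : Ω → ℝ) : ℕ → Ω → ℝ
  | 0 => fun _ => 0
  | (N+1) => fun ω => max 0 (f ω + maxS T f N (T ω))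

lemma maxS_nonneg (N : ℕ) (ω : Ω) : 0 ≤ maxS T f N ω := by
  cases N <;> simp [maxS]

lemma maxS_succ_le (N : ℕ) : ∀ ω : Ω, maxS T f N ω ≤ maxS T f (N+1) ω := by
  induction N with
  | zero => intro ω; exact maxS_nonneg 1 ω
  | succ N ih =>
    intro ω
    exact max_le_max le_rfl ((add_le_add_iff_left _).mpr (ih (T ω)))

lemma maxS_mono (ω : Ω) : Monotone (fun N => maxS T f N ω) :=
  monotone_nat_of_le_succ (fun N => maxS_succ_le N ω)

lemma birkhoffSum_le_maxS (N : ℕ) : ∀ n ≤ N, ∀ ω : Ω, birkhoffSum T f n ω ≤ maxS T f N ω := by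
  induction N with
  | zero =>
    intro n hn ω
    interval_cases n
    simp [birkhoffSum, maxS]
  | succ N ih =>
    intro n hn ω
    match n with
    | 0 => simpa [birkhoffSum] using maxS_nonneg (N+1) ω
    | (m+1) =>
      rw [birkhoffSum_succ']
      calc f ω + birkhoffSum T f m (T ω) ≤ f ω + maxS T f N (T ω) := by
            have := ih m (by omega) (T ω)
            linarith
        _ ≤ maxS T f (N+1) ω := le_max_right _ _

lemma maxS_eq_birkhoffSum (N : ℕ) : ∀ ω : Ω, maxS T f N ω = 0 ∨
    ∃ n, 1 ≤ n ∧ n ≤ N ∧ maxS T f N ω = birkhoffSum T f n ω := by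
  induction N with
  | zero => intro ω; left; rfl
  | succ N ih =>
    intro ω
    rcases le_total (f ω + maxS T f N (T ω)) 0 with h | h
    · left
      simp only [maxS]
      exact max_eq_left h
    · have hval : maxS T f (N+1) ω = f ω + maxS T f N (T ω) := max_eq_right h
      rcases ih (T ω) with h0 | ⟨n, h1, h2, he⟩
      · right
        exact ⟨1, le_rfl, by omega, by rw [hval, h0, birkhoffSum_one]; ring⟩
      · right
        refine ⟨n+1, by omega, by omega, ?_⟩
        rw [hval, he, birkhoffSum_succ']

lemma maxS_pos_exists {N : ℕ} {ω : Ω} (h : 0 < maxS T f N ω) :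
    ∃ n, 1 ≤ n ∧ n ≤ N ∧ 0 < birkhoffSum T f n ω := by
  rcases maxS_eq_birkhoffSum N ω with h0 | ⟨n, h1, h2, he⟩
  · rw [h0] at h; exact absurd h (lt_irrefl 0)
  · exact ⟨n, h1, h2, he ▸ h⟩

lemma maxS_measurable (hT : Measurable T) (hf : Measurable f) (N : ℕ) :
    Measurable (maxS T f N) := by
  induction N with
  | zero => exact measurable_const
  | succ N ih => exact measurable_const.max (hf.add (ih.comp hT))

lemma maxS_integrable (hT : MeasurePreserving T μ μ) (hfm : Measurable f)
    (hf : Integrable f μ) (N : ℕ) : Integrable (maxS T f N) μ := by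
  induction N with
  | zero => exact integrable_const 0
  | succ N ih =>
    have hcomp : Integrable (fun ω => f ω + maxS T f N (T ω)) μ :=
      hf.add ((hT.integrable_comp ih.aestronglyMeasurable).mpr ih)
    have h2 := (integrable_const (0:ℝ) (μ := μ)).sup hcomp
    apply h2.congr
    filter_upwards with ω
    show ((fun _ => (0:ℝ)) ⊔ fun ω => f ω + maxS T f N (T ω)) ω = _
    simp only [Pi.sup_apply, maxS]

lemma maxS_pos_le_shift {N : ℕ} {ω : Ω} (h : 0 < maxS T f N ω) :
    maxS T f N ω ≤ f ω + maxS T f N (T ω) := by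
  match N with
  | 0 => exact absurd h (by simp [maxS])
  | (N+1) =>
    rcases le_total (f ω + maxS T f N (T ω)) 0 with h' | h'
    · rw [show maxS T f (N+1) ω = max 0 (f ω + maxS T f N (T ω)) from rfl,
        max_eq_left h'] at h
      exact absurd h (lt_irrefl 0)
    · rw [show maxS T f (N+1) ω = max 0 (f ω + maxS T f N (T ω)) from rfl, max_eq_right h']
      have := maxS_succ_le (T := T) (f := f) N (T ω)
      linarith

lemma integral_comp_T (hT : MeasurePreserving T μ μ) {g : Ω → ℝ}
    (hg : AEStronglyMeasurable g μ) : ∫ ω, g (T ω) ∂μ = ∫ ω, g ω ∂μ := by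
  rw [← integral_map hT.measurable.aemeasurable (by rwa [hT.map_eq]), hT.map_eq]

/-- The maximal ergodic theorem (Garsia's proof). -/
lemma maximal_ergodic (hT : MeasurePreserving T μ μ) (hfm : Measurable f)
    (hf : Integrable f μ) (N : ℕ) :
    0 ≤ ∫ ω in {ω | 0 < maxS T f N ω}, f ω ∂μ := by
  set E := {ω | 0 < maxS T f N ω} with hE
  have hEmeas : MeasurableSet E :=
    measurableSet_lt measurable_const (maxS_measurable hT.measurable hfm N)
  have hΦint : Integrable (maxS T f N) μ := maxS_integrable hT hfm hf N
  have hΦTint : Integrable (fun ω => maxS T f N (T ω)) μ :=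
    (hT.integrable_comp hΦint.aestronglyMeasurable).mpr hΦint
  have hsubint : Integrable (fun ω => maxS T f N ω - maxS T f N (T ω)) μ := hΦint.sub hΦTint
  have step1 : ∫ ω in E, (maxS T f N ω - maxS T f N (T ω)) ∂μ ≤ ∫ ω in E, f ω ∂μ := by
    apply setIntegral_mono_on hsubint.integrableOn hf.integrableOn hEmeas
    intro ω hω
    have := maxS_pos_le_shift (hω : 0 < maxS T f N ω)
    linarith
  have step2 : ∫ ω, (maxS T f N ω - maxS T f N (T ω)) ∂μ
      ≤ ∫ ω in E, (maxS T f N ω - maxS T f N (T ω)) ∂μ := by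
    have hsplit := integral_add_compl hEmeas hsubint
    have hneg : ∫ ω in Eᶜ, (maxS T f N ω - maxS T f N (T ω)) ∂μ ≤ 0 := by
      apply setIntegral_nonpos hEmeas.compl
      intro ω hω
      have h0 : maxS T f N ω = 0 :=
        le_antisymm (not_lt.mp hω) (maxS_nonneg N ω)
      have := maxS_nonneg (T := T) (f := f) N (T ω)
      linarith
    linarith
  have step3 : ∫ ω, (maxS T f N ω - maxS T f N (T ω)) ∂μ = 0 := by
    rw [integral_sub hΦint hΦTint, integral_comp_T hT hΦint.aestronglyMeasurable, sub_self]
  linarith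

lemma maxS_indicator {A : Set Ω} (hTA : T ⁻¹' A = A) (g : Ω → ℝ) (N : ℕ) :
    ∀ ω, maxS T (A.indicator g) N ω = A.indicator (maxS T g N) ω := by
  induction N with
  | zero =>
    intro ω
    by_cases hω : ω ∈ A <;>
      simp [maxS, Set.indicator_of_mem, Set.indicator_of_notMem, hω]
  | succ N ih =>
    intro ω
    have hmem : ω ∈ A ↔ T ω ∈ A := by
      constructor
      · intro h; rw [← hTA] at h; exact h
      · intro h; rw [← hTA]; exact h
    by_cases hω : ω ∈ A
    · have hTω : T ω ∈ A := hmem.mp hω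
      simp only [maxS, ih (T ω), Set.indicator_of_mem hω, Set.indicator_of_mem hTω]
    · have hTω : T ω ∉ A := fun h => hω (hmem.mpr h)
      simp only [maxS, ih (T ω), Set.indicator_of_notMem hω, Set.indicator_of_notMem hTω]
      simp

/-- The set where some Birkhoff sum beats `c·n`. -/
def ESet (T : Ω → Ω) (f : Ω → ℝ) (c : ℝ) : Set Ω :=
  ⋃ N, {ω | 0 < maxS T (fun ω => f ω - c) N ω}

lemma ESet_measurable (hT : Measurable T) (hfm : Measurable f) (c : ℝ) :
    MeasurableSet (ESet T f c) :=
  MeasurableSet.iUnion fun N =>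
    measurableSet_lt measurable_const (maxS_measurable hT (hfm.sub measurable_const) N)

lemma birkhoffSum_sub_const (n : ℕ) (c : ℝ) (ω : Ω) :
    birkhoffSum T (fun ω => f ω - c) n ω = birkhoffSum T f n ω - n * c := by
  simp only [birkhoffSum, sum_sub_distrib, sum_const, card_range, nsmul_eq_mul]

lemma mem_ESet_iff (c : ℝ) (ω : Ω) :
    ω ∈ ESet T f c ↔ ∃ n, 1 ≤ n ∧ c * n < birkhoffSum T f n ω := by
  constructor
  · intro h
    obtain ⟨N, hN⟩ := Set.mem_iUnion.mp h
    obtain ⟨n, h1, _, h3⟩ := maxS_pos_exists hN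
    refine ⟨n, h1, ?_⟩
    rw [birkhoffSum_sub_const] at h3
    linarith [h3]
  · rintro ⟨n, h1, h2⟩
    apply Set.mem_iUnion.mpr ⟨n, ?_⟩
    have : 0 < birkhoffSum T (fun ω => f ω - c) n ω := by
      rw [birkhoffSum_sub_const]; linarith
    exact lt_of_lt_of_le this (birkhoffSum_le_maxS n n le_rfl ω)

/-- Maximal ergodic theorem on invariant sets, integrated form. -/
lemma maximal_invariant (hT : MeasurePreserving T μ μ) (hfm : Measurable f)
    (hf : Integrable f μ) {A : Set Ω} (hA : MeasurableSet A) (hTA : T ⁻¹' A = A) (c : ℝ) :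
    c * (μ (A ∩ ESet T f c)).toReal ≤ ∫ ω in A ∩ ESet T f c, f ω ∂μ := by
  set f' : Ω → ℝ := fun ω => f ω - c with hf'def
  have hf'm : Measurable f' := hfm.sub measurable_const
  have hf'int : Integrable f' μ := hf.sub (integrable_const c)
  set g : Ω → ℝ := A.indicator f' with hgdef
  have hgm : Measurable g := hf'm.indicator hA
  have hgint : Integrable g μ := hf'int.indicator hA
  have hsetN : ∀ N : ℕ, {ω | 0 < maxS T g N ω} = A ∩ {ω | 0 < maxS T f' N ω} := by
    intro N
    ext ω
    simp only [Set.mem_setOf_eq, Set.mem_inter_iff]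
    rw [maxS_indicator hTA f' N ω]
    by_cases hω : ω ∈ A
    · simp [Set.indicator_of_mem hω, hω]
    · simp [Set.indicator_of_notMem hω, hω]
  have hN : ∀ N : ℕ, 0 ≤ ∫ ω in A ∩ {ω | 0 < maxS T f' N ω}, f' ω ∂μ := by
    intro N
    have h0 := maximal_ergodic hT hgm hgint N
    rw [hsetN N] at h0
    have hEN : MeasurableSet (A ∩ {ω | 0 < maxS T f' N ω}) :=
      hA.inter (measurableSet_lt measurable_const (maxS_measurable hT.measurable hf'm N))
    rw [hgdef, setIntegral_indicator hA] at h0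
    have : A ∩ {ω | 0 < maxS T f' N ω} ∩ A = A ∩ {ω | 0 < maxS T f' N ω} := by
      rw [Set.inter_assoc, Set.inter_comm {ω | 0 < maxS T f' N ω} A, ← Set.inter_assoc,
        Set.inter_self]
    rwa [this] at h0
  have hmono : Monotone (fun N => A ∩ {ω | 0 < maxS T f' N ω}) := by
    intro M N hMN
    apply Set.inter_subset_inter_right
    intro ω hω
    exact lt_of_lt_of_le hω (maxS_mono (T := T) (f := f') ω hMN)
  have hmeasN : ∀ N : ℕ, MeasurableSet (A ∩ {ω | 0 < maxS T f' N ω}) := fun N =>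
    hA.inter (measurableSet_lt measurable_const (maxS_measurable hT.measurable hf'm N))
  have hUnion : (⋃ N, A ∩ {ω | 0 < maxS T f' N ω}) = A ∩ ESet T f c := by
    rw [← Set.inter_iUnion]
    rfl
  have htends := tendsto_setIntegral_of_monotone hmeasN hmono
    (hf'int.integrableOn (s := ⋃ N, A ∩ {ω | 0 < maxS T f' N ω}))
  rw [hUnion] at htends
  have hlim : 0 ≤ ∫ ω in A ∩ ESet T f c, f' ω ∂μ := ge_of_tendsto' htends hN
  have hAE : MeasurableSet (A ∩ ESet T f c) :=
    hA.inter (ESet_measurable hT.measurable hfm c)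
  rw [hf'def] at hlim
  rw [integral_sub hf.integrableOn (integrable_const c).integrableOn] at hlim
  rw [setIntegral_const] at hlim
  have : μ.real (A ∩ ESet T f c) • c = (μ (A ∩ ESet T f c)).toReal * c := rfl
  rw [this] at hlim
  linarith [hlim]

/-- Points where `S_n > c·n` infinitely often. -/
def freqSet (T : Ω → Ω) (f : Ω → ℝ) (c : ℝ) : Set Ω :=
  {ω | ∃ᶠ n in atTop, c * n < birkhoffSum T f n ω}

lemma freqSet_subset_ESet {c c' : ℝ} (hcc : c ≤ c') :
    freqSet T f c' ⊆ ESet T f c := by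
  intro ω hω
  obtain ⟨n, hn1, hn2⟩ := frequently_atTop.mp hω 1
  rw [mem_ESet_iff]
  refine ⟨n, hn1, lt_of_le_of_lt ?_ hn2⟩
  have : (1:ℝ) ≤ n := by exact_mod_cast hn1
  nlinarith

lemma freqSet_measurable (hT : Measurable T) (hfm : Measurable f) (c : ℝ) :
    MeasurableSet (freqSet T f c) := by
  have hSm : ∀ n : ℕ, Measurable (birkhoffSum T f n) := by
    intro n
    apply Finset.measurable_sum
    intro k _
    exact hfm.comp (hT.iterate k)
  have : freqSet T f c = ⋂ (N : ℕ), ⋃ (n : ℕ), ⋃ (_ : N ≤ n),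
      {ω | c * n < birkhoffSum T f n ω} := by
    ext ω
    simp only [freqSet, Set.mem_setOf_eq, frequently_atTop, Set.mem_iInter, Set.mem_iUnion,
      Set.mem_setOf_eq]
    constructor
    · intro h N; obtain ⟨n, h1, h2⟩ := h N; exact ⟨n, h1, h2⟩
    · intro h N; obtain ⟨n, h1, h2⟩ := h N; exact ⟨n, h1, h2⟩
  rw [this]
  exact MeasurableSet.iInter fun N => MeasurableSet.iUnion fun n => MeasurableSet.iUnion
    fun _ => measurableSet_lt measurable_const (hSm n)

/-- Transfer of frequent-overshoot along `T`, with slack: backward. -/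
lemma freqSet_back {c c' : ℝ} (hcc : c < c') {ω : Ω} (hω : T ω ∈ freqSet T f c') :
    ω ∈ freqSet T f c := by
  rw [freqSet, Set.mem_setOf_eq, frequently_atTop]
  intro N
  obtain ⟨M, hM⟩ := exists_nat_gt ((c - f ω) / (c' - c))
  obtain ⟨m, hm1, hm2⟩ := frequently_atTop.mp hω (max N M)
  refine ⟨m + 1, by omega, ?_⟩
  rw [birkhoffSum_succ']
  have hmM : (M:ℝ) ≤ m := by exact_mod_cast le_trans (le_max_right N M) hm1
  have hgt : (c - f ω) / (c' - c) < (m:ℝ) := lt_of_lt_of_le hM hmM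
  have hpos : (0:ℝ) < c' - c := by linarith
  rw [div_lt_iff₀ hpos] at hgt
  push_cast
  nlinarith

/-- Transfer of frequent-overshoot along `T`, with slack: forward. -/
lemma freqSet_fwd {c c' : ℝ} (hcc : c < c') {ω : Ω} (hω : ω ∈ freqSet T f c') :
    T ω ∈ freqSet T f c := by
  rw [freqSet, Set.mem_setOf_eq, frequently_atTop]
  intro N
  obtain ⟨M, hM⟩ := exists_nat_gt ((f ω - c) / (c' - c))
  obtain ⟨n, hn1, hn2⟩ := frequently_atTop.mp hω (max (N+1) (M+1))
  have hn1' : N + 1 ≤ n := le_trans (le_max_left _ _) hn1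
  have hnM : M + 1 ≤ n := le_trans (le_max_right _ _) hn1
  obtain ⟨m, rfl⟩ : ∃ m, n = m + 1 := ⟨n - 1, by omega⟩
  refine ⟨m, by omega, ?_⟩
  rw [birkhoffSum_succ'] at hn2
  have hpos : (0:ℝ) < c' - c := by linarith
  have hgt : (f ω - c) / (c' - c) < (m+1:ℝ) := by
    have : (M:ℝ) < (m+1:ℝ) := by exact_mod_cast hnM
    linarith [hM.trans this]
  rw [div_lt_iff₀ hpos] at hgt
  push_cast at hn2 ⊢
  nlinarith

/-- Invariant version of the overshoot set. -/
def upSet (T : Ω → Ω) (f : Ω → ℝ) (b : ℝ) : Set Ω :=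
  ⋂ (q : ℚ) (_ : (q:ℝ) < b), freqSet T f q

lemma upSet_measurable (hT : Measurable T) (hfm : Measurable f) (b : ℝ) :
    MeasurableSet (upSet T f b) :=
  MeasurableSet.iInter fun q => MeasurableSet.iInter fun _ => freqSet_measurable hT hfm q

lemma upSet_invariant (b : ℝ) : T ⁻¹' (upSet T f b) = upSet T f b := by
  ext ω
  simp only [Set.mem_preimage, upSet, Set.mem_iInter]
  constructor
  · intro h q hq
    obtain ⟨q', hq1, hq2⟩ := exists_rat_btwn hq
    exact freqSet_back (by exact_mod_cast hq1) (h q' hq2)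
  · intro h q hq
    obtain ⟨q', hq1, hq2⟩ := exists_rat_btwn hq
    exact freqSet_fwd (by exact_mod_cast hq1) (h q' hq2)

lemma upSet_subset_ESet {b c : ℝ} (hcb : c < b) : upSet T f b ⊆ ESet T f c := by
  obtain ⟨q, hq1, hq2⟩ := exists_rat_btwn hcb
  intro ω hω
  have := (Set.mem_iInter.mp (Set.mem_iInter.mp hω q)) hq2
  exact freqSet_subset_ESet hq1.le this

/-- Through invariance, the measure of an upcrossing-type region is zero. -/
lemma upcross_null (hT : MeasurePreserving T μ μ) (hfm : Measurable f)
    (hf : Integrable f μ) {a b : ℝ} (hab : a < b) :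
    μ (upSet T f b ∩ upSet T (fun ω => -f ω) (-a)) = 0 := by
  set A := upSet T f b ∩ upSet T (fun ω => -f ω) (-a) with hAdef
  have hAm : MeasurableSet A :=
    (upSet_measurable hT.measurable hfm b).inter
      (upSet_measurable hT.measurable hfm.neg (-a))
  have hTA : T ⁻¹' A = A := by
    rw [hAdef, Set.preimage_inter, upSet_invariant, upSet_invariant]
  set x := (μ A).toReal with hxdef
  have hx0 : 0 ≤ x := ENNReal.toReal_nonneg
  -- lower bound
  have hup : ∀ c : ℝ, c < b → c * x ≤ ∫ ω in A, f ω ∂μ := by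
    intro c hc
    have hsub : A ⊆ ESet T f c := fun ω hω => upSet_subset_ESet hc hω.1
    have : A ∩ ESet T f c = A := Set.inter_eq_self_of_subset_left hsub
    have h := maximal_invariant hT hfm hf hAm hTA c
    rwa [this] at h
  have hb : b * x ≤ ∫ ω in A, f ω ∂μ := by
    have htend : Tendsto (fun k : ℕ => (b - 1/(k+1)) * x) atTop (nhds (b * x)) := by
      have h1 : Tendsto (fun k : ℕ => 1/((k:ℝ)+1)) atTop (nhds 0) :=
        tendsto_one_div_add_atTop_nhds_zero_nat
      have := ((tendsto_const_nhds (x := b)).sub h1).mul_const x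
      simpa using this
    apply le_of_tendsto htend
    filter_upwards with k
    apply hup
    have : (0:ℝ) < 1/((k:ℝ)+1) := by positivity
    linarith
  -- upper bound via -f
  have hdown : ∀ c : ℝ, c < -a → c * x ≤ ∫ ω in A, -f ω ∂μ := by
    intro c hc
    have hsub : A ⊆ ESet T (fun ω => -f ω) c := fun ω hω => upSet_subset_ESet hc hω.2
    have heq : A ∩ ESet T (fun ω => -f ω) c = A := Set.inter_eq_self_of_subset_left hsub
    have h := maximal_invariant (f := fun ω => -f ω) hT hfm.neg hf.neg hAm hTA c
    rwa [heq] at h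
  have hna : (-a) * x ≤ ∫ ω in A, -f ω ∂μ := by
    have htend : Tendsto (fun k : ℕ => ((-a) - 1/(k+1)) * x) atTop (nhds ((-a) * x)) := by
      have h1 : Tendsto (fun k : ℕ => 1/((k:ℝ)+1)) atTop (nhds 0) :=
        tendsto_one_div_add_atTop_nhds_zero_nat
      have := ((tendsto_const_nhds (x := -a)).sub h1).mul_const x
      simpa using this
    apply le_of_tendsto htend
    filter_upwards with k
    apply hdown
    have : (0:ℝ) < 1/((k:ℝ)+1) := by positivity
    linarith
  rw [integral_neg] at hna
  have : b * x ≤ a * x := by linarith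
  have hx : x = 0 := by nlinarith
  rw [hxdef] at hx
  exact (ENNReal.toReal_eq_zero_iff _).mp hx |>.resolve_right (measure_ne_top μ A)

lemma birkhoffSum_neg' (n : ℕ) (ω : Ω) :
    birkhoffSum T (fun ω => -f ω) n ω = - birkhoffSum T f n ω := by
  simp [birkhoffSum]

/-- The set where averages are frequently above every bound is null. -/
lemma bdd_null (hT : MeasurePreserving T μ μ) (hfm : Measurable f) (hf : Integrable f μ) :
    μ (⋂ k : ℕ, ESet T f ((k:ℝ)+1)) = 0 := by
  set c0 := ∫ ω, |f ω| ∂μ with hc0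
  have hc00 : 0 ≤ c0 := integral_nonneg fun ω => abs_nonneg _
  have hkey : ∀ k : ℕ, ((k:ℝ)+1) * (μ (ESet T f ((k:ℝ)+1))).toReal ≤ c0 := by
    intro k
    have h := maximal_invariant hT hfm hf MeasurableSet.univ (Set.preimage_univ) ((k:ℝ)+1)
    rw [Set.univ_inter] at h
    have hEm : MeasurableSet (ESet T f ((k:ℝ)+1)) := ESet_measurable hT.measurable hfm _
    calc ((k:ℝ)+1) * (μ (ESet T f ((k:ℝ)+1))).toReal ≤ ∫ ω in ESet T f ((k:ℝ)+1), f ω ∂μ := h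
      _ ≤ ∫ ω in ESet T f ((k:ℝ)+1), |f ω| ∂μ :=
          setIntegral_mono_on hf.integrableOn hf.abs.integrableOn hEm
            (fun ω _ => le_abs_self _)
      _ ≤ c0 := setIntegral_le_integral hf.abs (Filter.Eventually.of_forall fun ω => abs_nonneg _)
  set t := (μ (⋂ k : ℕ, ESet T f ((k:ℝ)+1))).toReal with ht
  have htk : ∀ k : ℕ, t ≤ c0 / ((k:ℝ)+1) := by
    intro k
    have hmono : μ (⋂ k : ℕ, ESet T f ((k:ℝ)+1)) ≤ μ (ESet T f ((k:ℝ)+1)) :=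
      measure_mono (Set.iInter_subset _ k)
    have h1 : t ≤ (μ (ESet T f ((k:ℝ)+1))).toReal :=
      ENNReal.toReal_mono (measure_ne_top μ _) hmono
    have h2 := hkey k
    have hk1 : (0:ℝ) < (k:ℝ)+1 := by positivity
    rw [le_div_iff₀ hk1]
    nlinarith
  have hlim : Tendsto (fun k : ℕ => c0/((k:ℝ)+1)) atTop (nhds 0) := by
    apply Tendsto.div_atTop tendsto_const_nhds
    exact tendsto_atTop_add_const_right _ _ tendsto_natCast_atTop_atTop
  have ht0 : t ≤ 0 := ge_of_tendsto' hlim htk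
  have : t = 0 := le_antisymm ht0 ENNReal.toReal_nonneg
  rw [ht] at this
  exact ((ENNReal.toReal_eq_zero_iff _).mp this).resolve_right (measure_ne_top μ _)

/-- Birkhoff's pointwise ergodic theorem, measurable version (existence of the limit). -/
theorem birkhoff_ae_meas (hT : MeasurePreserving T μ μ) (hfm : Measurable f)
    (hf : Integrable f μ) :
    ∀ᵐ ω ∂μ, ∃ x : ℝ, Tendsto (fun n : ℕ => birkhoffSum T f n ω / n) atTop (nhds x) := by
  set N1 := ⋂ k : ℕ, ESet T f ((k:ℝ)+1) with hN1def
  set N2 := ⋂ k : ℕ, ESet T (fun ω => -f ω) ((k:ℝ)+1) with hN2def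
  set N3 := ⋃ p : ℚ × ℚ, (if (p.1:ℝ) < (p.2:ℝ) then
    upSet T f p.2 ∩ upSet T (fun ω => -f ω) (-(p.1:ℝ)) else ∅) with hN3def
  have hN1 : μ N1 = 0 := bdd_null hT hfm hf
  have hN2 : μ N2 = 0 := bdd_null hT hfm.neg hf.neg
  have hN3 : μ N3 = 0 := by
    apply measure_iUnion_null
    intro p
    split_ifs with h
    · exact upcross_null hT hfm hf (by exact_mod_cast h)
    · simp
  rw [ae_iff]
  apply measure_mono_null _ (measure_union_null (measure_union_null hN1 hN2) hN3)
  intro ω hω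
  simp only [Set.mem_setOf_eq, not_exists] at hω
  by_contra hmem
  simp only [Set.mem_union, not_or] at hmem
  obtain ⟨⟨hm1, hm2⟩, hm3⟩ := hmem
  -- bounded above
  have hex1 : ∃ k : ℕ, ω ∉ ESet T f ((k:ℝ)+1) := by
    by_contra h
    push_neg at h
    exact hm1 (Set.mem_iInter.mpr h)
  obtain ⟨k1, hk1⟩ := hex1
  have hub : ∀ n : ℕ, 1 ≤ n → birkhoffSum T f n ω / n ≤ (k1:ℝ)+1 := by
    intro n hn
    have hn' : (0:ℝ) < n := by exact_mod_cast hn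
    rw [div_le_iff₀ hn']
    by_contra hcon
    push_neg at hcon
    exact hk1 ((mem_ESet_iff _ ω).mpr ⟨n, hn, by linarith⟩)
  have hbdd1 : IsBoundedUnder (· ≤ ·) atTop (fun n : ℕ => birkhoffSum T f n ω / n) := by
    refine ⟨(k1:ℝ)+1, eventually_map.mpr ?_⟩
    filter_upwards [eventually_ge_atTop 1] with n hn
    exact hub n hn
  -- bounded below
  have hex2 : ∃ k : ℕ, ω ∉ ESet T (fun ω => -f ω) ((k:ℝ)+1) := by
    by_contra h
    push_neg at h
    exact hm2 (Set.mem_iInter.mpr h)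
  obtain ⟨k2, hk2⟩ := hex2
  have hlb : ∀ n : ℕ, 1 ≤ n → -((k2:ℝ)+1) ≤ birkhoffSum T f n ω / n := by
    intro n hn
    have hn' : (0:ℝ) < n := by exact_mod_cast hn
    rw [le_div_iff₀ hn']
    by_contra hcon
    push_neg at hcon
    apply hk2
    apply (mem_ESet_iff _ ω).mpr ⟨n, hn, ?_⟩
    rw [birkhoffSum_neg']
    nlinarith
  have hbdd2 : IsBoundedUnder (· ≥ ·) atTop (fun n : ℕ => birkhoffSum T f n ω / n) := by
    refine ⟨-((k2:ℝ)+1), eventually_map.mpr ?_⟩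
    filter_upwards [eventually_ge_atTop 1] with n hn
    exact hlb n hn
  -- no upcrossings
  have H : ∀ a ∈ Set.range ((↑) : ℚ → ℝ), ∀ b ∈ Set.range ((↑) : ℚ → ℝ), a < b →
      ¬((∃ᶠ n in atTop, birkhoffSum T f n ω / n < a) ∧
        (∃ᶠ n in atTop, b < birkhoffSum T f n ω / n)) := by
    rintro a ⟨p, rfl⟩ b ⟨q, rfl⟩ hab ⟨h1, h2⟩
    apply hm3
    rw [hN3def]
    apply Set.mem_iUnion.mpr ⟨(p, q), ?_⟩
    rw [if_pos hab]
    constructor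
    · -- ω ∈ upSet T f q
      apply Set.mem_iInter.mpr
      intro r
      apply Set.mem_iInter.mpr
      intro hr
      rw [freqSet, Set.mem_setOf_eq]
      apply ((h2.and_eventually (eventually_ge_atTop 1)).mono)
      rintro n ⟨hn1, hn2⟩
      have hn' : (0:ℝ) < n := by exact_mod_cast hn2
      rw [lt_div_iff₀ hn'] at hn1
      have : (r:ℝ) * n < (q:ℝ) * n := by
        apply mul_lt_mul_of_pos_right hr hn'
      linarith
    · -- ω ∈ upSet T (-f) (-p)
      apply Set.mem_iInter.mpr
      intro r
      apply Set.mem_iInter.mpr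
      intro hr
      rw [freqSet, Set.mem_setOf_eq]
      apply ((h1.and_eventually (eventually_ge_atTop 1)).mono)
      rintro n ⟨hn1, hn2⟩
      have hn' : (0:ℝ) < n := by exact_mod_cast hn2
      rw [div_lt_iff₀ hn'] at hn1
      rw [birkhoffSum_neg']
      have : (r:ℝ) * n < (-(p:ℝ)) * n := mul_lt_mul_of_pos_right hr hn'
      nlinarith
  obtain ⟨c, hc⟩ := tendsto_of_no_upcrossings Rat.denseRange_cast H hbdd1 hbdd2
  exact hω c hc

end Birkhoff


section Aux
lemma euclid_sum_apply {d : ℕ} (s : Finset ℕ) (v : ℕ → EuclideanSpace ℝ (Fin d)) (t : Fin d) :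
    (∑ k ∈ s, v k) t = ∑ k ∈ s, v k t := by
  induction s using Finset.induction with
  | empty => simp
  | insert _ _ h ih => rw [sum_insert h, sum_insert h, PiLp.add_apply, ih]

lemma euclid_abs_le_norm {d : ℕ} (x : EuclideanSpace ℝ (Fin d)) (t : Fin d) : |x t| ≤ ‖x‖ := by
  rw [EuclideanSpace.norm_eq, ← Real.sqrt_sq_eq_abs]
  apply Real.sqrt_le_sqrt
  have := Finset.single_le_sum (f := fun j => ‖x j‖^2) (fun j _ => by positivity)
    (Finset.mem_univ t)
  simpa [Real.norm_eq_abs, sq_abs] using this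

example {d : ℕ} (y : Fin d → ℝ) (t : Fin d) :
    (PiLp.continuousLinearEquiv 2 ℝ (fun _ : Fin d => ℝ)).symm y t = y t := rfl

example {d : ℕ} (x : EuclideanSpace ℝ (Fin d)) (i : Fin d) :
    EuclideanSpace.proj (𝕜 := ℝ) i x = x i := rfl
end Aux


open Filter Finset MeasureTheory

/-- Iterated sum of components of the orbit sequence `k ↦ g (F^[k] ω)`. -/
noncomputable def iterOrbitSum {Ω : Type*} {d : ℕ} (F : Ω → Ω)
    (g : Ω → EuclideanSpace ℝ (Fin d)) {ν : ℕ} (i : Fin ν → Fin d) (n : ℕ) (ω : Ω) : ℝ :=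
  ∑ k ∈ Finset.univ.filter (fun k : Fin ν → Fin n => ∀ p q : Fin ν, p < q → k p < k q),
    ∏ j : Fin ν, g (F^[(k j : ℕ)] ω) (i j)

theorem pointwise_iterated_ergodic {Ω : Type*} [MeasurableSpace Ω] (P : Measure Ω)
    [IsProbabilityMeasure P] {d : ℕ} (F : Ω → Ω) (hF : MeasurePreserving F P P)
    (g : Ω → EuclideanSpace ℝ (Fin d)) (hg : Integrable g P) :
    ∀ᵐ ω ∂P, ∃ Q : EuclideanSpace ℝ (Fin d),
      Tendsto (fun n : ℕ => (n : ℝ)⁻¹ • ∑ k ∈ Finset.range (n + 1), g (F^[k] ω))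
        atTop (nhds Q) ∧
      ∀ ν : ℕ, 1 ≤ ν → ∀ i : Fin ν → Fin d,
        Tendsto (fun n : ℕ => iterOrbitSum F g i n ω / (n : ℝ) ^ ν) atTop
          (nhds ((∏ j : Fin ν, Q (i j)) / (Nat.factorial ν : ℝ))) := by
  classical
  have hgsm := hg.aestronglyMeasurable
  set g' := hgsm.mk g with hg'def
  have hg'm : Measurable g' := hgsm.stronglyMeasurable_mk.measurable
  have hgg' : g =ᵐ[P] g' := hgsm.ae_eq_mk
  have hg'int : Integrable g' P := hg.congr hgg'
  -- a.e., the whole orbit of `ω` avoids `{g ≠ g'}`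
  have horb : ∀ᵐ ω ∂P, ∀ k : ℕ, g (F^[k] ω) = g' (F^[k] ω) := by
    rw [ae_all_iff]
    intro k
    exact (hF.iterate k).quasiMeasurePreserving.ae_eq_comp hgg'
  -- components are measurable and integrable
  have hfcm : ∀ i : Fin d, Measurable (fun ω => g' ω i) := by
    intro i
    exact (EuclideanSpace.proj (𝕜 := ℝ) i).continuous.measurable.comp hg'm
  have hfcint : ∀ i : Fin d, Integrable (fun ω => g' ω i) P := by
    intro i
    exact (EuclideanSpace.proj (𝕜 := ℝ) i).integrable_comp hg'int
  -- Birkhoff's theorem for the components and the norm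
  have hae1 : ∀ᵐ ω ∂P, ∀ i : Fin d, ∃ x : ℝ,
      Tendsto (fun n : ℕ => birkhoffSum F (fun ω => g' ω i) n ω / n) atTop (nhds x) := by
    rw [ae_all_iff]
    intro i
    exact birkhoff_ae_meas hF (hfcm i) (hfcint i)
  have hae2 : ∀ᵐ ω ∂P, ∃ M : ℝ,
      Tendsto (fun n : ℕ => birkhoffSum F (fun ω => ‖g' ω‖) n ω / n) atTop (nhds M) :=
    birkhoff_ae_meas hF hg'm.norm hg'int.norm
  filter_upwards [horb, hae1, hae2] with ω horbω hae1ω hae2ω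
  choose Qi hQi using hae1ω
  obtain ⟨M, hM⟩ := hae2ω
  -- a linear bound on the norm sums
  have hv : Tendsto (fun n : ℕ => birkhoffSum F (fun ω => ‖g' ω‖) n ω / ((n:ℝ)+1)) atTop
      (nhds M) := by
    have h2 : Tendsto (fun n : ℕ => (n:ℝ)/((n:ℝ)+1)) atTop (nhds 1) := by
      have := tendsto_natCast_div_add_atTop (𝕜 := ℝ) 1
      simpa using this
    have := hM.mul h2
    rw [mul_one] at this
    apply this.congr'
    filter_upwards [eventually_ge_atTop 1] with n hn
    have hn' : (0:ℝ) < n := by exact_mod_cast hn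
    field_simp
  obtain ⟨C, hC⟩ := hv.bddAbove_range
  have hCb : ∀ n : ℕ, birkhoffSum F (fun ω => ‖g' ω‖) n ω ≤ C * ((n:ℝ)+1) := by
    intro n
    have h1 : birkhoffSum F (fun ω => ‖g' ω‖) n ω / ((n:ℝ)+1) ≤ C :=
      hC (Set.mem_range_self n)
    have hn' : (0:ℝ) < (n:ℝ)+1 := by positivity
    rw [div_le_iff₀ hn'] at h1
    linarith
  -- orbit data
  set b : ℕ → Fin d → ℝ := fun m t => g (F^[m] ω) t with hbdef
  have hb' : ∀ m t, b m t = g' (F^[m] ω) t := by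
    intro m t
    rw [hbdef]
    simp only [horbω m]
  have hQ : ∀ t, Tendsto (fun n : ℕ => (∑ m ∈ range n, b m t)/(n:ℝ)) atTop (nhds (Qi t)) := by
    intro t
    apply ((hQi t).congr)
    intro n
    congr 1
    apply sum_congr rfl
    intro m _
    rw [hb']
  have habs : ∀ t (n : ℕ), ∑ m ∈ range n, |b m t| ≤ C * ((n:ℝ)+1) := by
    intro t n
    calc ∑ m ∈ range n, |b m t| ≤ ∑ m ∈ range n, ‖g' (F^[m] ω)‖ := by
          apply sum_le_sum
          intro m _
          rw [hb']
          exact euclid_abs_le_norm _ t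
      _ = birkhoffSum F (fun ω => ‖g' ω‖) n ω := rfl
      _ ≤ C * ((n:ℝ)+1) := hCb n
  -- the limit vector
  set Q : EuclideanSpace ℝ (Fin d) :=
    (PiLp.continuousLinearEquiv 2 ℝ (fun _ : Fin d => ℝ)).symm (fun i => Qi i) with hQdef
  have hQapp : ∀ t, Q t = Qi t := fun t => rfl
  refine ⟨Q, ?_, ?_⟩
  · -- convergence of the vector averages
    have hcomp : ∀ i : Fin d,
        Tendsto (fun n : ℕ => (n:ℝ)⁻¹ * ∑ k ∈ range (n+1), g' (F^[k] ω) i) atTop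
          (nhds (Qi i)) := by
      intro i
      have h1 : Tendsto (fun n : ℕ => birkhoffSum F (fun ω => g' ω i) (n+1) ω / ((n:ℝ)+1))
          atTop (nhds (Qi i)) := by
        have := (hQi i).comp (tendsto_add_atTop_nat 1)
        apply this.congr
        intro n
        simp only [Function.comp_apply]
        push_cast
        rfl
      have h2 : Tendsto (fun n : ℕ => ((n:ℝ)+1)/(n:ℝ)) atTop (nhds 1) := by
        have hinv : Tendsto (fun n : ℕ => 1/(n:ℝ)) atTop (nhds 0) := by
          exact tendsto_one_div_atTop_nhds_zero_nat
        have := (tendsto_const_nhds (x := (1:ℝ))).add hinv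
        rw [add_zero] at this
        apply this.congr'
        filter_upwards [eventually_ge_atTop 1] with n hn
        have hn' : (0:ℝ) < n := by exact_mod_cast hn
        field_simp
      have h3 := h1.mul h2
      rw [mul_one] at h3
      apply h3.congr'
      filter_upwards [eventually_ge_atTop 1] with n hn
      have hn' : (0:ℝ) < n := by exact_mod_cast hn
      have : birkhoffSum F (fun ω => g' ω i) (n+1) ω = ∑ k ∈ range (n+1), g' (F^[k] ω) i := rfl
      rw [this]
      field_simp
    have hpi : Tendsto (fun n : ℕ => (fun i => (n:ℝ)⁻¹ * ∑ k ∈ range (n+1), g' (F^[k] ω) i))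
        atTop (nhds (fun i => Qi i)) := tendsto_pi_nhds.mpr hcomp
    have hfin := ((PiLp.continuousLinearEquiv 2 ℝ
      (fun _ : Fin d => ℝ)).symm.continuous.tendsto _).comp hpi
    rw [← hQdef] at hfin
    apply hfin.congr
    intro n
    apply PiLp.ext
    intro t
    show ((n:ℝ)⁻¹ * ∑ k ∈ range (n+1), g' (F^[k] ω) t)
      = ((n:ℝ)⁻¹ • ∑ k ∈ range (n+1), g (F^[k] ω)) t
    rw [PiLp.smul_apply, euclid_sum_apply, smul_eq_mul]
    congr 1
    apply sum_congr rfl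
    intro k _
    rw [horbω k]
  · -- convergence of the iterated sums
    intro ν _ i
    have hmain := iterSum_tendsto b (fun t => Qi t) C hQ habs ν i
    have hprod : (∏ j : Fin ν, Q (i j)) = ∏ j : Fin ν, Qi (i j) :=
      prod_congr rfl fun j _ => hQapp _
    rw [hprod]
    apply hmain.congr
    intro n
    rfl
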